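/- Let T be the d-regular rooted tree, D ≥ 1, and P ≤ Aut(T^D) a minimal pattern subgroup with group of finite type G_P. Then the following are equivalent: (i) G_P is finite; (ii) St_P(D−1) = π_D(St_{G_P}(D−1)) is the trivial group; (iii) the restriction π_D : G_P → P is a group isomorphism (so G_P ≅ P); (iv) the Hausdorff dimension ℋ(G_P) equals 0. -/

import Mathlib

namespace TreeFT

/-- Vertices of the `d`-regular rooted tree: finite words over `Fin d`. -/
abbrev Vertex (d : ℕ) := List (Fin d)

theorem perm_apply_inv_self {α : Type*} (f : Equiv.Perm α) (x : α) : f (f⁻¹ x) = x :=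
  Equiv.apply_symm_apply f x

theorem perm_inv_apply_self {α : Type*} (f : Equiv.Perm α) (x : α) : f⁻¹ (f x) = x :=
  Equiv.symm_apply_apply f x

/-- The automorphism group of the `d`-regular rooted tree, realized as the subgroup of
permutations of the vertex set that preserve length (levels) and prefixes (adjacency). -/
def treeAut (d : ℕ) : Subgroup (Equiv.Perm (Vertex d)) where
  carrier := {g | (∀ v : Vertex d, (g v).length = v.length) ∧
      (∀ v w : Vertex d, (g (v ++ w)).take v.length = g v)}
  one_mem' := ⟨fun _ => rfl, fun _ _ => List.take_left⟩
  mul_mem' := by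
    rintro g h ⟨hg1, hg2⟩ ⟨hh1, hh2⟩
    refine ⟨fun v => by rw [Equiv.Perm.mul_apply, hg1, hh1], fun v w => ?_⟩
    have h1 : h (v ++ w) = h v ++ (h (v ++ w)).drop v.length := by
      conv_lhs => rw [← List.take_append_drop v.length (h (v ++ w))]
      rw [hh2]
    rw [Equiv.Perm.mul_apply, Equiv.Perm.mul_apply, h1]
    have h2 : v.length = (h v).length := (hh1 v).symm
    rw [h2]
    exact hg2 _ _
  inv_mem' := by
    rintro g ⟨hg1, hg2⟩
    constructor
    · intro v
      have h := hg1 (g⁻¹ v)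
      rw [perm_apply_inv_self] at h
      exact h.symm
    · intro v w
      apply g.injective
      have hlen : v.length ≤ (g⁻¹ (v ++ w)).length := by
        have h := hg1 (g⁻¹ (v ++ w))
        rw [perm_apply_inv_self] at h
        rw [← h, List.length_append]
        exact Nat.le_add_right _ _
      have h3 := hg2 ((g⁻¹ (v ++ w)).take v.length) ((g⁻¹ (v ++ w)).drop v.length)
      rw [List.take_append_drop, perm_apply_inv_self, List.length_take,
        min_eq_left hlen, List.take_left] at h3
      rw [← h3, perm_apply_inv_self]

variable {d : ℕ}

/-- `Aut(T)` as a type. -/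
abbrev TAut (d : ℕ) := ↥(treeAut d)

lemma length_apply (g : TAut d) (v : Vertex d) :
    ((g : Equiv.Perm (Vertex d)) v).length = v.length := g.2.1 v

lemma take_apply (g : TAut d) (v w : Vertex d) :
    ((g : Equiv.Perm (Vertex d)) (v ++ w)).take v.length = (g : Equiv.Perm (Vertex d)) v :=
  g.2.2 v w

lemma apply_append (g : TAut d) (v w : Vertex d) :
    (g : Equiv.Perm (Vertex d)) (v ++ w) =
      (g : Equiv.Perm (Vertex d)) v ++ ((g : Equiv.Perm (Vertex d)) (v ++ w)).drop v.length := by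
  conv_lhs => rw [← List.take_append_drop v.length ((g : Equiv.Perm (Vertex d)) (v ++ w))]
  rw [take_apply]

/-- The section `g|_v` of a tree automorphism at the vertex `v`. -/
def sect (g : TAut d) (v : Vertex d) : TAut d :=
  ⟨{ toFun := fun w => ((g : Equiv.Perm (Vertex d)) (v ++ w)).drop v.length
     invFun := fun w =>
       (((g : Equiv.Perm (Vertex d)))⁻¹ ((g : Equiv.Perm (Vertex d)) v ++ w)).drop v.length
     left_inv := by
       intro w
       show ((g : Equiv.Perm (Vertex d))⁻¹
         ((g : Equiv.Perm (Vertex d)) v ++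
           ((g : Equiv.Perm (Vertex d)) (v ++ w)).drop v.length)).drop v.length = w
       rw [← apply_append g v w, perm_inv_apply_self, List.drop_left]
     right_inv := by
       intro w
       show ((g : Equiv.Perm (Vertex d))
         (v ++ ((g : Equiv.Perm (Vertex d))⁻¹
           ((g : Equiv.Perm (Vertex d)) v ++ w)).drop v.length)).drop v.length = w
       have h2 := apply_append g⁻¹ ((g : Equiv.Perm (Vertex d)) v) w
       simp only [InvMemClass.coe_inv] at h2
       rw [perm_inv_apply_self, length_apply] at h2
       rw [← h2, perm_apply_inv_self, ← length_apply g v, List.drop_left] },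
   by
    constructor
    · intro w
      simp only [Equiv.coe_fn_mk, List.length_drop, length_apply, List.length_append]
      omega
    · intro w u
      simp only [Equiv.coe_fn_mk]
      rw [← List.append_assoc]
      have h0 : ((g : Equiv.Perm (Vertex d)) ((v ++ w) ++ u)).take (v ++ w).length
          = (g : Equiv.Perm (Vertex d)) (v ++ w) := take_apply g (v ++ w) u
      have h1 : w.length = (v.length + w.length) - v.length := by omega
      rw [h1, ← List.drop_take, ← List.length_append, h0]⟩

lemma sect_apply (g : TAut d) (v w : Vertex d) :
    ((sect g v : TAut d) : Equiv.Perm (Vertex d)) w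
      = ((g : Equiv.Perm (Vertex d)) (v ++ w)).drop v.length := rfl

lemma sect_mul (g h : TAut d) (v : Vertex d) :
    sect (g * h) v = sect g ((h : Equiv.Perm (Vertex d)) v) * sect h v := by
  apply Subtype.ext
  apply Equiv.ext
  intro w
  simp only [MulMemClass.coe_mul, Equiv.Perm.mul_apply, sect_apply]
  rw [← apply_append h v w, length_apply]

lemma sect_one (v : Vertex d) : sect (1 : TAut d) v = 1 := by
  apply Subtype.ext
  apply Equiv.ext
  intro w
  simp only [sect_apply, OneMemClass.coe_one, Equiv.Perm.coe_one, id_eq]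
  exact List.drop_left

end TreeFT
namespace TreeFT

variable {d : ℕ}

/-- The stabilizer `St(n)` of the `n`-th level: automorphisms acting trivially on the first
`n` levels of the tree. -/
def lst (d n : ℕ) : Subgroup (TAut d) where
  carrier := {g | ∀ v : Vertex d, v.length ≤ n → (g : Equiv.Perm (Vertex d)) v = v}
  one_mem' := fun _ _ => rfl
  mul_mem' := by
    intro g h hg hh v hv
    show (g : Equiv.Perm (Vertex d)) ((h : Equiv.Perm (Vertex d)) v) = v
    rw [hh v hv, hg v hv]
  inv_mem' := by
    intro g hg v hv
    show ((g : Equiv.Perm (Vertex d)))⁻¹ v = v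
    apply (g : Equiv.Perm (Vertex d)).injective
    rw [perm_apply_inv_self, hg v hv]

lemma mem_lst {g : TAut d} {n : ℕ} :
    g ∈ lst d n ↔ ∀ v : Vertex d, v.length ≤ n → (g : Equiv.Perm (Vertex d)) v = v :=
  Iff.rfl

instance lst_normal (d n : ℕ) : (lst d n).Normal := by
  constructor
  intro s hs g v hv
  show (g : Equiv.Perm (Vertex d))
    ((s : Equiv.Perm (Vertex d)) (((g : Equiv.Perm (Vertex d)))⁻¹ v)) = v
  have h1 : ((g⁻¹ : TAut d) : Equiv.Perm (Vertex d)) v = ((g : Equiv.Perm (Vertex d)))⁻¹ v := by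
    simp
  have h2 : (((g : Equiv.Perm (Vertex d)))⁻¹ v).length ≤ n := by
    rw [← h1, length_apply]; exact hv
  rw [hs _ h2, perm_apply_inv_self]

/-- `Aut(T^n)`, the automorphism group of the finite tree consisting of the first `n` levels,
realized as the quotient of `Aut(T)` by the `n`-th level stabilizer. -/
abbrev FAut (d n : ℕ) := TAut d ⧸ lst d n

/-- `π_n : Aut(T) → Aut(T^n)`, restriction to the first `n` levels. -/
def proj (d n : ℕ) : TAut d →* FAut d n := QuotientGroup.mk' (lst d n)

lemma proj_surjective (d n : ℕ) : Function.Surjective (proj d n) :=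
  QuotientGroup.mk'_surjective _

/-- The group of finite type `G_P` of depth `D` with pattern group `P ≤ Aut(T^D)`:
all tree automorphisms whose section at every vertex acts on the first `D` levels as an
element of `P`. -/
def gft (d D : ℕ) (P : Subgroup (FAut d D)) : Subgroup (TAut d) where
  carrier := {g | ∀ v : Vertex d, proj d D (sect g v) ∈ P}
  one_mem' := by
    intro v
    rw [sect_one, map_one]
    exact one_mem P
  mul_mem' := by
    intro g h hg hh v
    rw [sect_mul, map_mul]
    exact mul_mem (hg _) (hh _)
  inv_mem' := by
    intro g hg v
    have h2 : sect g (((g⁻¹ : TAut d) : Equiv.Perm (Vertex d)) v) * sect g⁻¹ v = 1 := by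
      rw [← sect_mul, mul_inv_cancel, sect_one]
    have h3 : sect g⁻¹ v = (sect g (((g⁻¹ : TAut d) : Equiv.Perm (Vertex d)) v))⁻¹ :=
      (inv_eq_of_mul_eq_one_right h2).symm
    rw [h3, map_inv]
    exact inv_mem (hg _)

lemma mem_gft {g : TAut d} {D : ℕ} {P : Subgroup (FAut d D)} :
    g ∈ gft d D P ↔ ∀ v : Vertex d, proj d D (sect g v) ∈ P := Iff.rfl

/-- `P ≤ Aut(T^D)` is a minimal pattern subgroup if `π_D(G_P) = P`. -/
def IsMinimalPattern (d D : ℕ) (P : Subgroup (FAut d D)) : Prop :=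
  (gft d D P).map (proj d D) = P

/-- A subgroup of `Aut(T)` is level-transitive if it acts transitively on every level. -/
def LevelTransitive (H : Subgroup (TAut d)) : Prop :=
  ∀ v w : Vertex d, v.length = w.length → ∃ g ∈ H, (g : Equiv.Perm (Vertex d)) v = w

/-- A subgroup of `Aut(T)` is self-similar if it contains all sections of its elements. -/
def SelfSimilar (H : Subgroup (TAut d)) : Prop :=
  ∀ g ∈ H, ∀ v : Vertex d, sect g v ∈ H

/-- A subgroup of `Aut(T)` is fractal if it is self-similar, level-transitive, and for every
vertex `v` the section map maps the stabilizer of `v` onto the whole group. -/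
def Fractal (H : Subgroup (TAut d)) : Prop :=
  SelfSimilar H ∧ LevelTransitive H ∧
    ∀ v : Vertex d, ∀ h ∈ H, ∃ k ∈ H, (k : Equiv.Perm (Vertex d)) v = v ∧ sect k v = h

/-- The geometric product `K_n` of `K` at level `n`: elements of `St(n)` all of whose sections
at level-`n` vertices lie in `K`. -/
def geom (K : Subgroup (TAut d)) (n : ℕ) : Subgroup (TAut d) where
  carrier := {g | g ∈ lst d n ∧ ∀ v : Vertex d, v.length = n → sect g v ∈ K}
  one_mem' := ⟨one_mem _, fun v _ => by rw [sect_one]; exact one_mem K⟩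
  mul_mem' := by
    rintro g h ⟨hg1, hg2⟩ ⟨hh1, hh2⟩
    refine ⟨mul_mem hg1 hh1, fun v hv => ?_⟩
    rw [sect_mul, hh1 v hv.le]
    exact mul_mem (hg2 v hv) (hh2 v hv)
  inv_mem' := by
    rintro g ⟨hg1, hg2⟩
    refine ⟨inv_mem hg1, fun v hv => ?_⟩
    have hfix : ((g⁻¹ : TAut d) : Equiv.Perm (Vertex d)) v = v :=
      (inv_mem hg1 : g⁻¹ ∈ lst d n) v hv.le
    have h2 : sect g v * sect g⁻¹ v = 1 := by
      have := sect_mul g g⁻¹ v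
      rw [mul_inv_cancel, sect_one, hfix] at this
      exact this.symm
    rw [(inv_eq_of_mul_eq_one_right h2).symm]
    exact inv_mem (hg2 v hv)

end TreeFT
namespace TreeFT

variable {d : ℕ}

/-- The congruence topology on `Aut(T)`: the topology of pointwise convergence on the vertex
set (each vertex set carrying the discrete topology); the level stabilizers `St(n)` form a
base of neighborhoods of the identity for it. -/
instance tautTopologicalSpace (d : ℕ) : TopologicalSpace (TAut d) :=
  TopologicalSpace.induced
    (fun g : TAut d => ((g : Equiv.Perm (Vertex d)) : Vertex d → Vertex d))
    (@Pi.topologicalSpace (Vertex d) (fun _ => Vertex d) (fun _ => ⊥))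

lemma isOpen_eval (d : ℕ) (v u : Vertex d) :
    IsOpen {g : TAut d | (g : Equiv.Perm (Vertex d)) v = u} := by
  letI : TopologicalSpace (Vertex d) := ⊥
  haveI : DiscreteTopology (Vertex d) := ⟨rfl⟩
  have h : IsOpen ((fun f : Vertex d → Vertex d => f v) ⁻¹' {u}) :=
    (continuous_apply (A := fun _ : Vertex d => Vertex d) v).isOpen_preimage ({u} : Set (Vertex d)) (isOpen_discrete _)
  exact isOpen_induced h

lemma isOpen_eval_mem (d : ℕ) (v : Vertex d) (s : Set (Vertex d)) :
    IsOpen {g : TAut d | (g : Equiv.Perm (Vertex d)) v ∈ s} := by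
  have h : {g : TAut d | (g : Equiv.Perm (Vertex d)) v ∈ s}
      = ⋃ u ∈ s, {g : TAut d | (g : Equiv.Perm (Vertex d)) v = u} := by
    ext g; simp
  rw [h]
  exact isOpen_biUnion fun u _ => isOpen_eval d v u

lemma continuous_into_vertex {X : Type*} [TopologicalSpace X] (f : X → Vertex d)
    (h : ∀ u : Vertex d, IsOpen (f ⁻¹' {u})) :
    @Continuous X (Vertex d) _ ⊥ f := by
  rw [continuous_def]
  intro s _
  have hs : f ⁻¹' s = ⋃ u ∈ s, f ⁻¹' {u} := by
    ext x; simp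
  rw [hs]
  exact isOpen_biUnion fun u _ => h u

instance tautContinuousMul (d : ℕ) : ContinuousMul (TAut d) := by
  constructor
  · -- continuity of multiplication
    apply continuous_induced_rng.2
    apply @continuous_pi _ _ _ _ (fun _ => (⊥ : TopologicalSpace (Vertex d)))
    intro v
    apply continuous_into_vertex
      (f := fun p : TAut d × TAut d => ((p.1 * p.2 : TAut d) : Equiv.Perm (Vertex d)) v)
    intro u
    have h : (fun p : TAut d × TAut d =>
          ((p.1 * p.2 : TAut d) : Equiv.Perm (Vertex d)) v) ⁻¹' {u}
        = ⋃ w : Vertex d, ({g : TAut d | (g : Equiv.Perm (Vertex d)) w = u} ×ˢ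
            {h : TAut d | (h : Equiv.Perm (Vertex d)) v = w}) := by
      ext p
      simp only [Set.mem_preimage, Set.mem_singleton_iff, Set.mem_iUnion, Set.mem_prod,
        Set.mem_setOf_eq]
      constructor
      · intro hp
        exact ⟨(p.2 : Equiv.Perm (Vertex d)) v, hp, rfl⟩
      · rintro ⟨w, hw1, hw2⟩
        show (p.1 : Equiv.Perm (Vertex d)) ((p.2 : Equiv.Perm (Vertex d)) v) = u
        rw [hw2]; exact hw1
    rw [h]
    exact isOpen_iUnion fun w => (isOpen_eval d w u).prod (isOpen_eval d v w)

instance tautContinuousInv (d : ℕ) : ContinuousInv (TAut d) := by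
  constructor
  · -- continuity of inversion
    apply continuous_induced_rng.2
    apply @continuous_pi _ _ _ _ (fun _ => (⊥ : TopologicalSpace (Vertex d)))
    intro v
    apply continuous_into_vertex
      (f := fun g : TAut d => ((g⁻¹ : TAut d) : Equiv.Perm (Vertex d)) v)
    intro u
    have h : (fun g : TAut d => ((g⁻¹ : TAut d) : Equiv.Perm (Vertex d)) v) ⁻¹' {u}
        = {g : TAut d | (g : Equiv.Perm (Vertex d)) u = v} := by
      ext g
      simp only [Set.mem_preimage, Set.mem_singleton_iff, Set.mem_setOf_eq,
        InvMemClass.coe_inv]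
      constructor
      · intro hg; rw [← hg, perm_apply_inv_self]
      · intro hg; rw [← hg, perm_inv_apply_self]
    rw [h]
    exact isOpen_eval d u v

instance tautTopologicalGroup (d : ℕ) : IsTopologicalGroup (TAut d) := ⟨⟩

/-- A subgroup of `Aut(T)` (viewed as a topological group with the congruence topology) is
topologically finitely generated if it contains a finitely generated dense subgroup. -/
def TopFG (H : Subgroup (TAut d)) : Prop :=
  ∃ S : Set ↥H, S.Finite ∧ Dense ((Subgroup.closure S : Subgroup ↥H) : Set ↥H)

/-- A profinite group is just-infinite if it is infinite and every nontrivial closed normal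
subgroup has finite index. -/
def JustInfinite (H : Subgroup (TAut d)) : Prop :=
  Infinite ↥H ∧ ∀ N : Subgroup ↥H, N.Normal → IsClosed (N : Set ↥H) → N ≠ ⊥ → N.index ≠ 0

/-- A profinite group is strongly complete if every subgroup of finite index is open. -/
def StronglyComplete (H : Subgroup (TAut d)) : Prop :=
  ∀ N : Subgroup ↥H, N.index ≠ 0 → IsOpen (N : Set ↥H)

end TreeFT

namespace TreeFT

open Filter

/-- The Hausdorff dimension of a (closed) subgroup `H ≤ Aut(T)`:
`ℋ(H) = liminf_n log|π_n(H)| / log|π_n(Aut(T))|`. -/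
noncomputable def hausdorffDim (d : ℕ) (H : Subgroup (TAut d)) : ℝ :=
  liminf (fun n : ℕ =>
    Real.log (Nat.card ↥(H.map (proj d n))) / Real.log (Nat.card (FAut d n))) atTop

/-- `St_P(D-1) = π_D(St_{G_P}(D-1))`. -/
def stP (d D : ℕ) (P : Subgroup (FAut d D)) : Subgroup (FAut d D) :=
  (gft d D P ⊓ lst d (D - 1)).map (proj d D)

end TreeFT

/-!
If `St_P(D-1)` is trivial, an element of `G_P` fixing level `D` has its sections at the
level-one vertices in `G_P ∩ St(D-1)`, so they fix level `D` as well; descending the tree, it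
is trivial. Hence `π_D` is injective on `G_P`, which is then isomorphic to `P` and finite, and a
finite group has dimension `0` because `log |Aut(T^n)| → ∞`.

Conversely, an element `g ∈ G_P ∩ St(D-1)` moving a vertex of level `D` can be grafted
independently below each of the `d^m` vertices of level `m` without leaving `G_P`: every
depth-`D` pattern of the result is a pattern of `g` or trivial. This gives
`|π_{m+D}(G_P)| ≥ 2^(d^m)`, while `log |Aut(T^n)| = O(d^n)`, so `ℋ(G_P) > 0`.
-/

namespace TreeFT

open Filter Topology

variable {d : ℕ}

lemma taut_ext {g h : TAut d}
    (H : ∀ v : Vertex d, (g : Equiv.Perm (Vertex d)) v = (h : Equiv.Perm (Vertex d)) v) :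
    g = h :=
  Subtype.ext (Equiv.ext H)

lemma apply_nil (g : TAut d) : (g : Equiv.Perm (Vertex d)) [] = [] :=
  List.length_eq_zero_iff.mp (length_apply g [])

lemma sect_nil (g : TAut d) : sect g [] = g :=
  taut_ext fun v => by simp [sect_apply]

lemma sect_sect (g : TAut d) (v w : Vertex d) : sect (sect g v) w = sect g (v ++ w) :=
  taut_ext fun u => by
    rw [sect_apply, sect_apply, sect_apply, List.drop_drop, List.append_assoc,
      List.length_append, Nat.add_comm]

lemma apply_append_singleton (g : TAut d) (v : Vertex d) (a : Fin d) :
    (g : Equiv.Perm (Vertex d)) (v ++ [a]) =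
      (g : Equiv.Perm (Vertex d)) v ++ [((g : Equiv.Perm (Vertex d)) (v ++ [a])).getLastD a] := by
  have hlen : (((g : Equiv.Perm (Vertex d)) (v ++ [a])).drop v.length).length = 1 := by
    simp [length_apply]
  obtain ⟨x, hx⟩ := List.length_eq_one_iff.mp hlen
  rw [apply_append g v [a], hx, List.getLastD_concat]

lemma eq_of_length_eq_of_le_one (hd : d ≤ 1) {v w : Vertex d} (h : v.length = w.length) :
    v = w :=
  List.ext_get h fun n h1 h2 => Fin.ext (by omega)

lemma two_le_of_apply_ne {g : TAut d} {w : Vertex d} (hw : (g : Equiv.Perm (Vertex d)) w ≠ w) :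
    2 ≤ d := by
  by_contra! hd
  exact hw (eq_of_length_eq_of_le_one (by omega) (length_apply g w))

lemma proj_eq_one_iff {n : ℕ} {g : TAut d} : proj d n g = 1 ↔ g ∈ lst d n :=
  QuotientGroup.eq_one_iff g

lemma proj_eq_iff {n : ℕ} {g h : TAut d} :
    proj d n g = proj d n h ↔ ∀ v : Vertex d, v.length ≤ n →
      (g : Equiv.Perm (Vertex d)) v = (h : Equiv.Perm (Vertex d)) v := by
  rw [proj, QuotientGroup.mk'_apply, QuotientGroup.mk'_apply, QuotientGroup.eq]
  refine forall₂_congr fun v _ => ?_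
  rw [MulMemClass.coe_mul, InvMemClass.coe_inv, Equiv.Perm.mul_apply, Equiv.Perm.inv_eq_iff_eq,
    eq_comm]

lemma sect_mem_lst {n j : ℕ} {g : TAut d} (hg : g ∈ lst d n) {u : Vertex d}
    (hu : u.length + j ≤ n) : sect g u ∈ lst d j := by
  intro w hw
  rw [sect_apply, hg (u ++ w) (by rw [List.length_append]; omega), List.drop_left]

lemma eq_one_of_forall_sect_mem_lst_one {g : TAut d} (hg : ∀ u : Vertex d, sect g u ∈ lst d 1) :
    g = 1 := by
  refine taut_ext fun v => ?_
  induction v using List.reverseRecOn with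
  | nil => exact apply_nil g
  | append_singleton v a ih =>
    have hva : ((g : Equiv.Perm (Vertex d)) (v ++ [a])).drop v.length = [a] := by
      simpa [sect_apply] using hg v [a] (by simp)
    simp only [OneMemClass.coe_one, Equiv.Perm.one_apply] at ih ⊢
    rw [apply_append, ih, hva]

lemma proj_eq_of_getLastD_eq {n : ℕ} {g h : TAut d}
    (H : ∀ v : Vertex d, v.length < n → ∀ a : Fin d,
      ((g : Equiv.Perm (Vertex d)) (v ++ [a])).getLastD a =
        ((h : Equiv.Perm (Vertex d)) (v ++ [a])).getLastD a) :
    proj d n g = proj d n h := by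
  refine proj_eq_iff.mpr fun v => ?_
  induction v using List.reverseRecOn with
  | nil => intro _; rw [apply_nil, apply_nil]
  | append_singleton v a ih =>
    intro hv
    rw [List.length_append, List.length_singleton] at hv
    rw [apply_append_singleton g, apply_append_singleton h, ih (by omega), H v (by omega) a]

instance (n : ℕ) : Finite {v : Vertex d // v.length < n} :=
  (List.finite_length_lt (Fin d) n).to_subtype

/-- The injection records the local permutation `a ↦ last letter of g (v ++ [a])` of a
representative `g` at each vertex `v` of level `< n`. -/
lemma exists_injective_faut (n : ℕ) :
    ∃ f : FAut d n → ({v : Vertex d // v.length < n} → Fin d → Fin d),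
      Function.Injective f := by
  let s : FAut d n → TAut d := Function.surjInv (proj_surjective d n)
  have hs : ∀ x, proj d n (s x) = x := Function.surjInv_eq (proj_surjective d n)
  refine ⟨fun x v a => ((s x : Equiv.Perm (Vertex d)) (v.1 ++ [a])).getLastD a,
    fun x y hxy => ?_⟩
  rw [← hs x, ← hs y]
  exact proj_eq_of_getLastD_eq fun v hv a => congr_fun (congr_fun hxy ⟨v, hv⟩) a

instance (n : ℕ) : Finite (FAut d n) :=
  let ⟨_, hf⟩ := exists_injective_faut (d := d) n
  Finite.of_injective _ hf

lemma card_length_lt_le (hd : 2 ≤ d) (n : ℕ) :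
    Nat.card {v : Vertex d // v.length < n} ≤ d ^ n := by
  let e : {v : Vertex d // v.length < n} ≃ Σ k : Fin n, List.Vector (Fin d) k :=
    { toFun := fun v => ⟨⟨v.1.length, v.2⟩, ⟨v.1, rfl⟩⟩
      invFun := fun p => ⟨p.2.1, p.2.2.trans_lt p.1.2⟩
      left_inv := fun _ => rfl
      right_inv := by rintro ⟨⟨k, hk⟩, v, hv : v.length = k⟩; subst hv; rfl }
  rw [Nat.card_congr e, Nat.card_sigma]
  simp only [Nat.card_eq_fintype_card, card_vector, Fintype.card_fin]
  rw [Fin.sum_univ_eq_sum_range (fun k => d ^ k) n]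
  exact (Nat.geomSum_lt hd (by simp)).le

lemma card_faut_le (hd : 2 ≤ d) (n : ℕ) : Nat.card (FAut d n) ≤ (d ^ d) ^ d ^ n := by
  obtain ⟨f, hf⟩ := exists_injective_faut (d := d) n
  refine (Nat.card_le_card_of_injective f hf).trans ?_
  rw [Nat.card_fun, Nat.card_fun, Nat.card_fin]
  exact Nat.pow_le_pow_right (by positivity) (card_length_lt_le hd n)

lemma exists_eq_append_of_le_length {v : Vertex d} {m : ℕ} (h : m ≤ v.length) :
    ∃ v₁ v₂ : Vertex d, v₁.length = m ∧ v = v₁ ++ v₂ :=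
  ⟨v.take m, v.drop m, by simp [h], (List.take_append_drop m v).symm⟩

section ActBelow

variable (b : Vertex d → Bool) (m : ℕ) (g : TAut d)

/-- Acts as `g` below each level-`m` vertex `v` with `b v`, and trivially elsewhere. -/
def actBelowFun (v : Vertex d) : Vertex d :=
  v.take m ++ if b (v.take m) then (g : Equiv.Perm (Vertex d)) (v.drop m) else v.drop m

variable {b m g}

lemma actBelowFun_append {v : Vertex d} (hv : v.length = m) (w : Vertex d) :
    actBelowFun b m g (v ++ w) = v ++ if b v then (g : Equiv.Perm (Vertex d)) w else w := by
  rw [actBelowFun, List.take_left' hv, List.drop_left' hv]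

lemma actBelowFun_of_length_le {v : Vertex d} (hv : v.length ≤ m) : actBelowFun b m g v = v := by
  rw [actBelowFun, List.take_of_length_le hv, List.drop_eq_nil_of_le hv, apply_nil, ite_self,
    List.append_nil]

lemma actBelowFun_take (v : Vertex d) : (actBelowFun b m g v).take m = v.take m := by
  rcases le_total v.length m with hv | hv
  · rw [actBelowFun_of_length_le hv]
  · obtain ⟨v₁, v₂, hv₁, rfl⟩ := exists_eq_append_of_le_length hv
    rw [actBelowFun_append hv₁, List.take_left' hv₁, List.take_left' hv₁]

lemma actBelowFun_inv (v : Vertex d) : actBelowFun b m g⁻¹ (actBelowFun b m g v) = v := by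
  rcases le_total v.length m with hv | hv
  · rw [actBelowFun_of_length_le hv, actBelowFun_of_length_le hv]
  · obtain ⟨v₁, v₂, hv₁, rfl⟩ := exists_eq_append_of_le_length hv
    rw [actBelowFun_append hv₁, actBelowFun_append hv₁]
    split_ifs <;> simp

lemma length_actBelowFun (v : Vertex d) : (actBelowFun b m g v).length = v.length := by
  rcases le_total v.length m with hv | hv
  · rw [actBelowFun_of_length_le hv]
  · obtain ⟨v₁, v₂, hv₁, rfl⟩ := exists_eq_append_of_le_length hv
    rw [actBelowFun_append hv₁]
    split_ifs <;> simp [length_apply]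

lemma take_actBelowFun (v w : Vertex d) :
    (actBelowFun b m g (v ++ w)).take v.length = actBelowFun b m g v := by
  rcases le_total v.length m with hv | hv
  · have htake : ∀ x : Vertex d, (x.take m).take v.length = x.take v.length := fun x => by
      rw [List.take_take, min_eq_left hv]
    rw [actBelowFun_of_length_le hv, ← htake, actBelowFun_take, htake, List.take_left]
  · obtain ⟨v₁, v₂, hv₁, rfl⟩ := exists_eq_append_of_le_length hv
    rw [List.append_assoc, actBelowFun_append hv₁, actBelowFun_append hv₁, List.length_append,
      List.take_length_add_append]
    split_ifs
    · rw [take_apply]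
    · rw [List.take_left]

variable (b m g)

def actBelow : TAut d :=
  ⟨{ toFun := actBelowFun b m g
     invFun := actBelowFun b m g⁻¹
     left_inv := actBelowFun_inv
     right_inv := fun v => by simpa using actBelowFun_inv (g := g⁻¹) v },
   length_actBelowFun, take_actBelowFun⟩

variable {b m g}

lemma actBelow_apply_append {v : Vertex d} (hv : v.length = m) (w : Vertex d) :
    ((actBelow b m g : TAut d) : Equiv.Perm (Vertex d)) (v ++ w)
      = v ++ if b v then (g : Equiv.Perm (Vertex d)) w else w :=
  actBelowFun_append hv w

lemma actBelow_mem_lst {j : ℕ} (hg : g ∈ lst d j) : actBelow b m g ∈ lst d (m + j) := by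
  intro v hv
  change actBelowFun b m g v = v
  rcases le_total v.length m with hvm | hvm
  · exact actBelowFun_of_length_le hvm
  · obtain ⟨v₁, v₂, hv₁, rfl⟩ := exists_eq_append_of_le_length hvm
    rw [actBelowFun_append hv₁, hg v₂ (by simp at hv; omega), ite_self]

lemma sect_actBelow {u : Vertex d} (hu : u.length = m) :
    sect (actBelow b m g) u = if b u then g else 1 := by
  refine taut_ext fun w => ?_
  rw [sect_apply, actBelow_apply_append hu, List.drop_left]
  split_ifs <;> rfl

lemma actBelow_mem_gft {D : ℕ} {P : Subgroup (FAut d D)} (hD : 1 ≤ D) (hg : g ∈ gft d D P)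
    (hg' : g ∈ lst d (D - 1)) : actBelow b m g ∈ gft d D P := by
  intro u
  rcases lt_or_ge u.length m with hu | hu
  · rw [proj_eq_one_iff.mpr (sect_mem_lst (actBelow_mem_lst hg') (by omega))]
    exact one_mem P
  · obtain ⟨u₁, u₂, hu₁, rfl⟩ := exists_eq_append_of_le_length hu
    rw [← sect_sect, sect_actBelow hu₁]
    split_ifs
    · exact hg u₂
    · rw [sect_one, map_one]
      exact one_mem P

end ActBelow

/-- Grafting a vertex-moving `g` independently below the `d ^ m` vertices of level `m` gives
`2 ^ d ^ m` automorphisms that already differ on level `m + |w|`. -/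
lemma two_pow_le_card_map_proj {H : Subgroup (TAut d)} {g : TAut d} {w : Vertex d}
    (hw : (g : Equiv.Perm (Vertex d)) w ≠ w) {m n : ℕ} (hn : m + w.length ≤ n)
    (hH : ∀ b, actBelow b m g ∈ H) : 2 ^ d ^ m ≤ Nat.card (H.map (proj d n)) := by
  let select : (List.Vector (Fin d) m → Bool) → Vertex d → Bool := fun c v =>
    if hv : v.length = m then c ⟨v, hv⟩ else false
  let f : (List.Vector (Fin d) m → Bool) → H.map (proj d n) := fun c =>
    ⟨proj d n (actBelow (select c) m g), Subgroup.mem_map_of_mem _ (hH _)⟩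
  have hf : Function.Injective f := by
    intro c₁ c₂ hc
    funext v
    have hvw := proj_eq_iff.mp (congrArg Subtype.val hc) (v.1 ++ w) (by simp [v.2]; omega)
    rw [actBelow_apply_append v.2, actBelow_apply_append v.2] at hvw
    have hv : ∀ c, select c v.1 = c v := fun c => dif_pos v.2
    rw [hv, hv] at hvw
    have hcancel := List.append_cancel_left hvw
    cases h₁ : c₁ v <;> cases h₂ : c₂ v <;>
      simp only [h₁, h₂, Bool.false_eq_true, if_true, if_false] at hcancel
    · rfl
    · exact absurd hcancel.symm hw
    · exact absurd hcancel hw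
    · rfl
  calc 2 ^ d ^ m = Nat.card (List.Vector (Fin d) m → Bool) := by
        simp [Nat.card_eq_fintype_card, card_vector]
    _ ≤ _ := Nat.card_le_card_of_injective f hf

def mapLetters (σ : Equiv.Perm (Fin d)) : TAut d :=
  ⟨Equiv.listEquivOfEquiv σ, fun v => List.length_map σ,
    fun v w => by
      change (List.map σ (v ++ w)).take v.length = List.map σ v
      rw [List.map_append, List.take_left' (List.length_map σ)]⟩

lemma le_card_faut (hd : 2 ≤ d) (n : ℕ) : n ≤ Nat.card (FAut d n) := by
  obtain _ | m := n
  · exact Nat.zero_le _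
  let a : Fin d := ⟨0, by omega⟩
  let σ : TAut d := mapLetters (Equiv.swap a ⟨1, hd⟩)
  have hσ : (σ : Equiv.Perm (Vertex d)) [a] ≠ [a] := by
    simp [σ, a, mapLetters, Equiv.listEquivOfEquiv, Equiv.swap_apply_left]
  have h := two_pow_le_card_map_proj (H := ⊤) (m := m) (n := m + 1) hσ le_rfl
    fun _ => Subgroup.mem_top _
  rw [Subgroup.map_top_of_surjective _ (proj_surjective d _), Subgroup.card_top] at h
  calc m + 1 ≤ d ^ m := Nat.lt_pow_self hd
    _ ≤ 2 ^ d ^ m := Nat.lt_two_pow_self.le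
    _ ≤ _ := h

lemma tendsto_div_log_card_faut (c : ℝ) :
    Tendsto (fun n => c / Real.log (Nat.card (FAut d n))) atTop (𝓝 0) := by
  rcases le_or_gt d 1 with hd | hd
  · have : Subsingleton (TAut d) := ⟨fun g h => taut_ext fun v =>
      eq_of_length_eq_of_le_one hd ((length_apply g v).trans (length_apply h v).symm)⟩
    simp
  · refine tendsto_const_nhds.div_atTop (Real.tendsto_log_atTop.comp ?_)
    exact tendsto_natCast_atTop_atTop.comp (tendsto_atTop_mono (le_card_faut hd) tendsto_id)

noncomputable def dimRatio (H : Subgroup (TAut d)) (n : ℕ) : ℝ :=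
  Real.log (Nat.card (H.map (proj d n))) / Real.log (Nat.card (FAut d n))

lemma hausdorffDim_eq_liminf (H : Subgroup (TAut d)) :
    hausdorffDim d H = liminf (dimRatio H) atTop :=
  rfl

lemma one_le_card_map_proj (H : Subgroup (TAut d)) (n : ℕ) :
    (1 : ℝ) ≤ Nat.card (H.map (proj d n)) := by
  exact_mod_cast Nat.card_pos

lemma log_card_map_proj_le (H : Subgroup (TAut d)) (n : ℕ) :
    Real.log (Nat.card (H.map (proj d n))) ≤ Real.log (Nat.card (FAut d n)) :=
  Real.log_le_log (by linarith [one_le_card_map_proj H n])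
    (by exact_mod_cast Subgroup.card_le_card_group _)

lemma dimRatio_nonneg (H : Subgroup (TAut d)) (n : ℕ) : 0 ≤ dimRatio H n :=
  div_nonneg (Real.log_nonneg (one_le_card_map_proj H n))
    (Real.log_nonneg (by exact_mod_cast Nat.card_pos))

lemma dimRatio_le_one (H : Subgroup (TAut d)) (n : ℕ) : dimRatio H n ≤ 1 :=
  div_le_one_of_le₀ (log_card_map_proj_le H n) (Real.log_nonneg (by exact_mod_cast Nat.card_pos))

lemma hausdorffDim_eq_zero_of_finite (H : Subgroup (TAut d)) [Finite H] :
    hausdorffDim d H = 0 := by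
  rw [hausdorffDim_eq_liminf]
  refine Tendsto.liminf_eq (squeeze_zero (dimRatio_nonneg H) (fun n => ?_)
    (tendsto_div_log_card_faut (d := d) (Real.log (Nat.card H))))
  refine div_le_div_of_nonneg_right (Real.log_le_log (by linarith [one_le_card_map_proj H n]) ?_)
    (Real.log_nonneg (by exact_mod_cast Nat.card_pos))
  exact_mod_cast Nat.le_of_dvd Nat.card_pos (Subgroup.card_map_dvd H _)

/-- Doubly exponential growth of the level images forces positive dimension, since
`log |Aut(T^n)|` is only of order `d ^ n`. -/
lemma hausdorffDim_pos_of_two_pow_le {H : Subgroup (TAut d)} (hd : 2 ≤ d) {D : ℕ}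
    (hH : ∀ m, 2 ^ d ^ m ≤ Nat.card (H.map (proj d (m + D)))) : 0 < hausdorffDim d H := by
  have hlogd : 0 < Real.log d := Real.log_pos (by exact_mod_cast hd)
  set C : ℝ := (d : ℝ) ^ D * (d * Real.log d)
  have hC : 0 < C := by positivity
  have key : ∀ m, Real.log 2 / C ≤ dimRatio H (m + D) := by
    intro m
    have hlow : (d : ℝ) ^ m * Real.log 2 ≤ Real.log (Nat.card (H.map (proj d (m + D)))) := by
      calc (d : ℝ) ^ m * Real.log 2 = Real.log ((2 : ℝ) ^ d ^ m) := by
            rw [Real.log_pow]; push_cast; ring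
        _ ≤ _ := Real.log_le_log (by positivity) (by exact_mod_cast hH m)
    have hup : Real.log (Nat.card (FAut d (m + D))) ≤ (d : ℝ) ^ m * C := by
      calc Real.log (Nat.card (FAut d (m + D)))
          ≤ Real.log (((d : ℝ) ^ d) ^ d ^ (m + D)) :=
            Real.log_le_log (by exact_mod_cast Nat.card_pos) (by exact_mod_cast card_faut_le hd _)
        _ = (d : ℝ) ^ m * C := by rw [Real.log_pow, Real.log_pow, pow_add]; push_cast; ring
    have hpos : 0 < Real.log (Nat.card (FAut d (m + D))) :=
      (by positivity : 0 < (d : ℝ) ^ m * Real.log 2).trans_le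
        (hlow.trans (log_card_map_proj_le H _))
    calc Real.log 2 / C = (d : ℝ) ^ m * Real.log 2 / ((d : ℝ) ^ m * C) := by
          rw [mul_div_mul_left _ _ (by positivity)]
      _ ≤ (d : ℝ) ^ m * Real.log 2 / Real.log (Nat.card (FAut d (m + D))) :=
          div_le_div_of_nonneg_left (by positivity) hpos hup
      _ ≤ dimRatio H (m + D) := div_le_div_of_nonneg_right hlow hpos.le
  have hev : ∀ᶠ n in atTop, Real.log 2 / C ≤ dimRatio H n := by
    filter_upwards [eventually_ge_atTop D] with n hn
    obtain ⟨m, rfl⟩ := Nat.exists_eq_add_of_le' hn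
    exact key m
  rw [hausdorffDim_eq_liminf]
  exact (by positivity : 0 < Real.log 2 / C).trans_le <| le_liminf_of_le
    (isBoundedUnder_of ⟨1, dimRatio_le_one H⟩).isCoboundedUnder_ge hev

section FiniteType

variable {D : ℕ} {P : Subgroup (FAut d D)}

lemma proj_mem_of_mem_gft {g : TAut d} (hg : g ∈ gft d D P) : proj d D g ∈ P := by
  simpa [sect_nil] using hg []

lemma sect_mem_gft {g : TAut d} (hg : g ∈ gft d D P) (v : Vertex d) : sect g v ∈ gft d D P :=
  fun w => by rw [sect_sect]; exact hg _

lemma exists_apply_ne_of_stP_ne_bot (h : stP d D P ≠ ⊥) :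
    ∃ g ∈ gft d D P, g ∈ lst d (D - 1) ∧
      ∃ w : Vertex d, w.length ≤ D ∧ (g : Equiv.Perm (Vertex d)) w ≠ w := by
  obtain ⟨_, ⟨g, ⟨hg, hg'⟩, rfl⟩, hne⟩ :=
    (Subgroup.bot_or_exists_ne_one _).resolve_left h
  have hgD : g ∉ lst d D := fun hgD => hne (proj_eq_one_iff.mpr hgD)
  simp only [mem_lst, not_forall, exists_prop] at hgD
  exact ⟨g, hg, hg', hgD⟩

lemma hausdorffDim_gft_pos (hD : 1 ≤ D) (h : stP d D P ≠ ⊥) :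
    0 < hausdorffDim d (gft d D P) := by
  obtain ⟨g, hg, hg', w, hw, hgw⟩ := exists_apply_ne_of_stP_ne_bot h
  exact hausdorffDim_pos_of_two_pow_le (two_le_of_apply_ne hgw) fun m =>
    two_pow_le_card_map_proj (m := m) (n := m + D) hgw (by omega) fun _ =>
      actBelow_mem_gft hD hg hg'

lemma eq_one_of_mem_gft_of_mem_lst (hD : 1 ≤ D) (hP : stP d D P = ⊥) {g : TAut d}
    (hg : g ∈ gft d D P) (hgD : g ∈ lst d D) : g = 1 := by
  suffices h : ∀ u : Vertex d, ∀ k ∈ gft d D P, k ∈ lst d D → sect k u ∈ lst d D from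
    eq_one_of_forall_sect_mem_lst_one fun u v hv => h u g hg hgD v (by omega)
  intro u
  induction u with
  | nil => intro k _ hkD; rwa [sect_nil]
  | cons a u ih =>
    intro k hk hkD
    -- `sect k [a]` lies in `G_P ∩ St(D - 1)`, so triviality of `St_P(D - 1)` puts it in `St(D)`.
    have hka : proj d D (sect k [a]) ∈ stP d D P :=
      Subgroup.mem_map_of_mem _ ⟨sect_mem_gft hk _, sect_mem_lst hkD (by simp; omega)⟩
    rw [hP, Subgroup.mem_bot, proj_eq_one_iff] at hka
    rw [← List.singleton_append, ← sect_sect]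
    exact ih _ (sect_mem_gft hk _) hka

lemma bijOn_proj_gft (hD : 1 ≤ D) (hmin : IsMinimalPattern d D P) (hP : stP d D P = ⊥) :
    Set.BijOn (proj d D) (gft d D P : Set (TAut d)) (P : Set (FAut d D)) := by
  refine ⟨fun g hg => proj_mem_of_mem_gft hg, fun g hg h hh hgh => ?_, fun p hp => ?_⟩
  · refine inv_mul_eq_one.mp (eq_one_of_mem_gft_of_mem_lst hD hP (mul_mem (inv_mem hg) hh) ?_)
    rw [← proj_eq_one_iff, map_mul, map_inv, hgh, inv_mul_cancel]
  · rw [SetLike.mem_coe, ← hmin] at hp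
    obtain ⟨g, hg, rfl⟩ := hp
    exact ⟨g, hg, rfl⟩

end FiniteType

/-- Let `P ≤ Aut(T^D)` be a minimal pattern subgroup with group of finite
type `G_P`.  Then the following are equivalent: (i) `G_P` is finite; (ii) `St_P(D−1)` is
trivial; (iii) `π_D` restricts to a group isomorphism `G_P → P`; (iv) `ℋ(G_P) = 0`. -/
theorem statement_13 (d D : ℕ) (hD : 1 ≤ D) (P : Subgroup (FAut d D))
    (hmin : IsMinimalPattern d D P) :
    List.TFAE
      [ Finite ↥(gft d D P),
        stP d D P = ⊥,
        Set.BijOn (proj d D) (gft d D P : Set (TAut d)) (P : Set (FAut d D)),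
        hausdorffDim d (gft d D P) = 0 ] := by
  tfae_have 1 → 4 := fun _ => hausdorffDim_eq_zero_of_finite _
  tfae_have 4 → 2 := fun h => by
    by_contra hne
    exact (hausdorffDim_gft_pos hD hne).ne' h
  tfae_have 2 → 3 := bijOn_proj_gft hD hmin
  tfae_have 3 → 1 := fun h => Finite.of_equiv _ (h.equiv _).symm
  tfae_finish

end TreeFT
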